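/- arXiv:1402.1665 — 5 statements merged into one kernel-verified Lean document; each statement's English description precedes it below -/
import Mathlib

section
/- Let H be a real Hilbert space, let V and U be mutually orthogonal closed subspaces of H, let W = V ⊕ U (so that π_W = π_V + π_U for the orthogonal projections), and let L be a bounded self-adjoint operator on H. Then ‖L − π_V L π_V − π_U L π_U − (1−π_W) L (1−π_W)‖ ≤ ‖L π_W − π_W L‖ + ‖L π_V − π_V L‖, where ‖·‖ denotes the operator norm. -/
/-!
Write `P = π_V`, `Q = π_U`, so that `π_W = P + Q`. A ring identity turns the operator on the left
into the sum of the off-diagonal parts `Q L P + P L Q` and `(1 - π_W) L π_W + π_W L (1 - π_W)`.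
For star projections `p`, `q` with `p q = 0`, the off-diagonal part `q a p + p a q` equals
`q D p - p D q` with `D = a p - p a`; its two terms have orthogonal ranges and see orthogonal
components `p x`, `q x` of the input, so its norm is at most `‖D‖`. Apply this to `(P, Q)` and to
`(π_W, 1 - π_W)`.
-/

open scoped InnerProductSpace

/-- The orthogonal projection of a Hilbert space onto (the closure of) a subspace, viewed as a
continuous linear operator `H →L[ℝ] H`. For a closed subspace this is the usual orthogonal
projection onto it. -/
noncomputable def orthProj {H : Type*} [NormedAddCommGroup H] [InnerProductSpace ℝ H]
    [CompleteSpace H] (V : Submodule ℝ H) : H →L[ℝ] H :=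
  V.topologicalClosure.subtypeL.comp V.topologicalClosure.orthogonalProjectionOnto

namespace IsStarProjection

variable {𝕜 E : Type*} [RCLike 𝕜] [NormedAddCommGroup E] [InnerProductSpace 𝕜 E]
  [CompleteSpace E] {p q : E →L[𝕜] E}

theorem norm_apply_le (hp : IsStarProjection p) (x : E) : ‖p x‖ ≤ ‖x‖ :=
  (p.le_opNorm x).trans (mul_le_of_le_one_left (norm_nonneg x) (hp.norm_le p))

theorem inner_apply_apply_eq_zero (hp : IsStarProjection p) (hpq : p * q = 0) (x y : E) :
    ⟪p x, q y⟫_𝕜 = 0 := by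
  rw [← ContinuousLinearMap.adjoint_inner_right, ← ContinuousLinearMap.star_eq_adjoint,
    hp.isSelfAdjoint.star_eq, ← mul_apply_eq_comp, hpq, zero_apply, inner_zero_right]

theorem norm_sq_apply_add_norm_sq_apply_le (hp : IsStarProjection p) (hq : IsStarProjection q)
    (hpq : p * q = 0) (x : E) : ‖p x‖ ^ 2 + ‖q x‖ ^ 2 ≤ ‖x‖ ^ 2 := calc
  ‖p x‖ ^ 2 + ‖q x‖ ^ 2 = ‖(p + q) x‖ ^ 2 := by
    simp only [sq, add_apply]
    exact (norm_add_sq_eq_norm_sq_add_norm_sq_of_inner_eq_zero _ _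
      (hp.inner_apply_apply_eq_zero hpq x x)).symm
  _ ≤ ‖x‖ ^ 2 := by gcongr; exact (hp.add hq hpq).norm_apply_le x

theorem norm_mul_mul_add_mul_mul_le (hp : IsStarProjection p) (hq : IsStarProjection q)
    (hpq : p * q = 0) (a : E →L[𝕜] E) : ‖q * a * p + p * a * q‖ ≤ ‖a * p - p * a‖ := by
  have hqp : q * p = 0 :=
    (hp.isSelfAdjoint.commute_of_mul_eq_zero hq.isSelfAdjoint hpq).eq ▸ hpq
  have hsplit : q * a * p + p * a * q = q * (a * p - p * a) * p - p * (a * p - p * a) * q := by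
    calc q * a * p + p * a * q
        = q * a * (p * p) - q * p * a * p - p * a * (p * q) + p * p * a * q := by
          rw [hp.isIdempotentElem.eq, hqp, hpq]; noncomm_ring
      _ = _ := by noncomm_ring
  rw [hsplit]
  set d := a * p - p * a
  refine ContinuousLinearMap.opNorm_le_bound _ (norm_nonneg d) fun x => ?_
  simp only [sub_apply, mul_apply_eq_comp]
  have pythagoras :
      ‖q (d (p x)) - p (d (q x))‖ ^ 2 = ‖q (d (p x))‖ ^ 2 + ‖p (d (q x))‖ ^ 2 := by
    rw [norm_sub_sq (𝕜 := 𝕜), hq.inner_apply_apply_eq_zero hqp, map_zero, mul_zero, sub_zero]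
  have hsq : ‖q (d (p x)) - p (d (q x))‖ ^ 2 ≤ (‖d‖ * ‖x‖) ^ 2 := calc
    _ ≤ (‖d‖ * ‖p x‖) ^ 2 + (‖d‖ * ‖q x‖) ^ 2 := by
      rw [pythagoras]
      gcongr
      · exact (hq.norm_apply_le _).trans (d.le_opNorm _)
      · exact (hp.norm_apply_le _).trans (d.le_opNorm _)
    _ = ‖d‖ ^ 2 * (‖p x‖ ^ 2 + ‖q x‖ ^ 2) := by ring
    _ ≤ ‖d‖ ^ 2 * ‖x‖ ^ 2 := by gcongr; exact hp.norm_sq_apply_add_norm_sq_apply_le hq hpq x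
    _ = (‖d‖ * ‖x‖) ^ 2 := by ring
  exact (pow_le_pow_iff_left₀ (norm_nonneg _) (by positivity) two_ne_zero).mp hsq

end IsStarProjection

theorem Submodule.IsOrtho.topologicalClosure {𝕜 E : Type*} [RCLike 𝕜] [NormedAddCommGroup E]
    [InnerProductSpace 𝕜 E] {U V : Submodule 𝕜 E} (h : U ⟂ V) :
    U.topologicalClosure ⟂ V.topologicalClosure :=
  U.topologicalClosure_minimal (h.trans V.orthogonal_closure.ge) (isClosed_orthogonal _)

section orthProj

variable {H : Type*} [NormedAddCommGroup H] [InnerProductSpace ℝ H] [CompleteSpace H]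
  {V U : Submodule ℝ H}

theorem isStarProjection_orthProj (V : Submodule ℝ H) : IsStarProjection (orthProj V) :=
  isStarProjection_starProjection

theorem orthProj_mul_orthProj_of_isOrtho (h : V ⟂ U) : orthProj V * orthProj U = 0 :=
  h.topologicalClosure.starProjection_comp_starProjection

theorem orthProj_apply_mem_topologicalClosure (V : Submodule ℝ H) (x : H) :
    orthProj V x ∈ V.topologicalClosure :=
  V.topologicalClosure.starProjection_apply_mem x

theorem sub_orthProj_add_orthProj_mem_orthogonal (h : V ⟂ U) (x : H) :
    x - (orthProj V x + orthProj U x) ∈ Vᗮ := by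
  rw [← sub_sub, ← V.orthogonal_closure]
  exact sub_mem (V.topologicalClosure.sub_starProjection_mem_orthogonal x)
    (h.symm.topologicalClosure (orthProj_apply_mem_topologicalClosure U x))

theorem orthProj_sup_of_isOrtho (h : V ⟂ U) : orthProj (V ⊔ U) = orthProj V + orthProj U := by
  ext x
  refine Submodule.eq_starProjection_of_mem_orthogonal ?_ ?_
  · exact add_mem
      (Submodule.topologicalClosure_mono le_sup_left (orthProj_apply_mem_topologicalClosure V x))
      (Submodule.topologicalClosure_mono le_sup_right (orthProj_apply_mem_topologicalClosure U x))
  · rw [Submodule.orthogonal_closure, ← Submodule.inf_orthogonal]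
    refine ⟨sub_orthProj_add_orthProj_mem_orthogonal h x, ?_⟩
    rw [add_comm]
    exact sub_orthProj_add_orthProj_mem_orthogonal h.symm x

end orthProj

theorem compression_block_estimate_general
    {H : Type*} [NormedAddCommGroup H] [InnerProductSpace ℝ H] [CompleteSpace H]
    (V U W : Submodule ℝ H)
    (horth : ∀ v ∈ V, ∀ u ∈ U, ⟪v, u⟫_ℝ = 0)
    (hW : W = V ⊔ U)
    (L : H →L[ℝ] H) :
    ‖L - orthProj V * L * orthProj V - orthProj U * L * orthProj U
        - (1 - orthProj W) * L * (1 - orthProj W)‖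
      ≤ ‖L * orthProj W - orthProj W * L‖ + ‖L * orthProj V - orthProj V * L‖ := by
  subst hW
  have hVU : V ⟂ U := Submodule.isOrtho_iff_inner_eq.mpr horth
  rw [orthProj_sup_of_isOrtho hVU]
  have hP := isStarProjection_orthProj V
  have hQ := isStarProjection_orthProj U
  have hPQ := orthProj_mul_orthProj_of_isOrtho hVU
  have hR := hP.add hQ hPQ
  set P := orthProj V
  set Q := orthProj U
  calc _ = ‖(Q * L * P + P * L * Q)
          + ((1 - (P + Q)) * L * (P + Q) + (P + Q) * L * (1 - (P + Q)))‖ := by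
        congr 1; noncomm_ring
    _ ≤ ‖Q * L * P + P * L * Q‖
          + ‖(1 - (P + Q)) * L * (P + Q) + (P + Q) * L * (1 - (P + Q))‖ := norm_add_le _ _
    _ ≤ ‖L * P - P * L‖ + ‖L * (P + Q) - (P + Q) * L‖ :=
        add_le_add (hP.norm_mul_mul_add_mul_mul_le hQ hPQ L)
          (hR.norm_mul_mul_add_mul_mul_le hR.one_sub hR.mul_one_sub_self L)
    _ = _ := add_comm _ _

/-- For mutually orthogonal closed subspaces `V, U` of a real Hilbert space,
`W = V ⊕ U`, and a bounded self-adjoint operator `L`,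
`‖L − π_V L π_V − π_U L π_U − (1−π_W) L (1−π_W)‖ ≤ ‖L π_W − π_W L‖ + ‖L π_V − π_V L‖`. -/
theorem compression_block_estimate
    {H : Type*} [NormedAddCommGroup H] [InnerProductSpace ℝ H] [CompleteSpace H]
    (V U W : Submodule ℝ H)
    (hV_closed : IsClosed (V : Set H)) (hU_closed : IsClosed (U : Set H))
    (hW_closed : IsClosed (W : Set H))
    (horth : ∀ v ∈ V, ∀ u ∈ U, ⟪v, u⟫_ℝ = 0)
    (hW : W = V ⊔ U)
    (L : H →L[ℝ] H) (hL_sa : IsSelfAdjoint L) :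
    ‖L - orthProj V * L * orthProj V - orthProj U * L * orthProj U
        - (1 - orthProj W) * L * (1 - orthProj W)‖
      ≤ ‖L * orthProj W - orthProj W * L‖ + ‖L * orthProj V - orthProj V * L‖ :=
  compression_block_estimate_general V U W horth hW L
end

section
/- Let H be a real Hilbert space and L a bounded self-adjoint operator on H such that for some δ₀ > 0 the spectrum of L intersected with (−δ₀, δ₀) is contained in {0}. Let V ⊆ W be closed subspaces of H with ker L ⊆ V, and let U be the orthogonal complement of V in W (so W = V ⊕ U orthogonally and π_U = π_W − π_V). Then for every x ∈ U, ‖π_U(L x)‖ ≥ (δ₀ − ‖π_W L − L π_W‖ − ‖π_V L − L π_V‖)·‖x‖. In particular, if ‖π_W L − L π_W‖ + ‖π_V L − L π_V‖ < δ₀, then the operator π_U ∘ L restricted to U is injective (the bilinear form ⟨π_U L x, y⟩ on U is nondegenerate). -/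
open scoped InnerProductSpace

theorem spectrum.sqrt_mem_or_neg_sqrt_mem_of_mem_mul_self {A : Type*} [Ring A] [Algebra ℝ A]
    {a : A} {t : ℝ} (ht : 0 ≤ t) (h : t ∈ spectrum ℝ (a * a)) :
    √t ∈ spectrum ℝ a ∨ -√t ∈ spectrum ℝ a := by
  contrapose! h
  simp only [spectrum.notMem_iff] at h ⊢
  have hcomm : a * algebraMap ℝ A √t = algebraMap ℝ A √t * a := (Algebra.commutes _ _).symm
  have hsq : algebraMap ℝ A √t * algebraMap ℝ A √t = algebraMap ℝ A t := by
    rw [← map_mul, Real.mul_self_sqrt ht]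
  have hfactor : algebraMap ℝ A t - a * a =
      -((algebraMap ℝ A √t - a) * (algebraMap ℝ A (-√t) - a)) := by
    simp only [map_neg, sub_mul, mul_sub, mul_neg, hcomm, hsq]
    abel
  rw [hfactor]
  exact (h.1.mul h.2).neg

section SelfAdjoint

variable {𝕜 E : Type*} [RCLike 𝕜] [NormedAddCommGroup E] [InnerProductSpace 𝕜 E] [CompleteSpace E]

theorem IsSelfAdjoint.norm_le_of_forall_mem_spectrum {T : E →L[𝕜] E} (hT : IsSelfAdjoint T)
    {ρ : ℝ} (hρ : 0 ≤ ρ) (h : ∀ μ ∈ spectrum 𝕜 T, ‖μ‖ ≤ ρ) : ‖T‖ ≤ ρ := by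
  have hrad : spectralRadius 𝕜 T ≤ ENNReal.ofReal ρ :=
    iSup₂_le fun μ hμ => by
      rw [← enorm_eq_nnnorm, ← ofReal_norm]
      exact ENNReal.ofReal_le_ofReal (h μ hμ)
  rw [T.spectralRadius_eq_nnnorm hT, ← enorm_eq_nnnorm, ← ofReal_norm] at hrad
  exact (ENNReal.ofReal_le_ofReal_iff hρ).mp hrad

theorem IsSelfAdjoint.mul_norm_le_norm_apply_of_forall_mem_spectrum {T : E →L[𝕜] E}
    (hT : IsSelfAdjoint T) {r : ℝ} (hr : 0 < r) (h : ∀ μ ∈ spectrum 𝕜 T, r ≤ ‖μ‖) (x : E) :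
    r * ‖x‖ ≤ ‖T x‖ := by
  obtain ⟨u, rfl⟩ : IsUnit T := by
    by_contra hT0
    have := h 0 ((spectrum.zero_mem_iff 𝕜).mpr hT0)
    rw [norm_zero] at this
    exact hr.not_ge this
  set S : E →L[𝕜] E := ↑u⁻¹
  have hS : IsSelfAdjoint S := by
    have hu : IsSelfAdjoint u := Units.ext hT.star_eq
    simpa [IsSelfAdjoint, Units.coe_star] using congrArg Units.val hu.inv.star_eq
  have hnorm : ‖S‖ ≤ r⁻¹ := by
    refine hS.norm_le_of_forall_mem_spectrum (inv_nonneg.mpr hr.le) fun μ hμ => ?_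
    rw [← spectrum.map_inv, Set.mem_inv] at hμ
    have hμr := h _ hμ
    rw [norm_inv] at hμr
    exact (le_inv_comm₀ hr (inv_pos.mp (hr.trans_le hμr))).mp hμr
  calc r * ‖x‖ = r * ‖(S * (u : E →L[𝕜] E)) x‖ := by rw [u.inv_mul]; rfl
    _ ≤ r * (r⁻¹ * ‖(u : E →L[𝕜] E) x‖) := by
        gcongr
        exact (S.le_opNorm ((u : E →L[𝕜] E) x)).trans (by gcongr)
    _ = ‖(u : E →L[𝕜] E) x‖ := by field_simp

end SelfAdjoint

section SpectralGap

variable {H : Type*} [NormedAddCommGroup H] [InnerProductSpace ℝ H] [CompleteSpace H]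
  {L : H →L[ℝ] H} {δ : ℝ}

theorem IsSelfAdjoint.mul_norm_apply_le_norm_apply_apply_of_spectrum_gap (hL : IsSelfAdjoint L)
    (hδ : 0 < δ) (hgap : spectrum ℝ L ∩ Set.Ioo (-δ) δ ⊆ {0}) (y : H) :
    δ * ‖L y‖ ≤ ‖L (L y)‖ := by
  set c := δ ^ 2 / 2 with hc
  set T := L * L - algebraMap ℝ (H →L[ℝ] H) c
  have hT : IsSelfAdjoint T := by
    have hLL : IsSelfAdjoint (L * L) := by simpa only [sq] using hL.pow 2
    exact hLL.sub (.algebraMap _ (.all c))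
  have hspecT : ∀ μ ∈ spectrum ℝ T, c ≤ ‖μ‖ := by
    intro μ hμ
    by_contra! hlt
    rw [Real.norm_eq_abs, abs_lt] at hlt
    have hμc : μ + c ∈ spectrum ℝ (L * L) := by
      have hshift : algebraMap ℝ (H →L[ℝ] H) (μ + c) - L * L = algebraMap ℝ _ μ - T := by
        simp only [T, map_add]
        abel
      rw [spectrum.mem_iff, hshift]
      exact hμ
    have hpos : 0 < √(μ + c) := Real.sqrt_pos.mpr (by linarith)
    have hsqrt_lt : √(μ + c) < δ := (Real.sqrt_lt' hδ).mpr (by linarith)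
    rcases spectrum.sqrt_mem_or_neg_sqrt_mem_of_mem_mul_self (by linarith) hμc with h | h
    · exact hpos.ne' (hgap ⟨h, by linarith, hsqrt_lt⟩)
    · exact hpos.ne' (neg_eq_zero.mp (hgap ⟨h, by linarith, by linarith⟩))
  have hbound := hT.mul_norm_le_norm_apply_of_forall_mem_spectrum (by positivity) hspecT y
  have hTy : ‖T y‖ ^ 2 = ‖L (L y)‖ ^ 2 - δ ^ 2 * ‖L y‖ ^ 2 + c ^ 2 * ‖y‖ ^ 2 := by
    have hLL : ⟪L (L y), y⟫_ℝ = ‖L y‖ ^ 2 :=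
      (hL.isSymmetric (L y) y).trans (real_inner_self_eq_norm_sq _)
    have hTy' : T y = L (L y) - c • y := rfl
    rw [hTy', norm_sub_sq_real, real_inner_smul_right, hLL, norm_smul, Real.norm_eq_abs,
      abs_of_nonneg (by positivity)]
    ring
  have hsq : (c * ‖y‖) ^ 2 ≤ ‖T y‖ ^ 2 := pow_le_pow_left₀ (by positivity) hbound 2
  have : (δ * ‖L y‖) ^ 2 ≤ ‖L (L y)‖ ^ 2 := by nlinarith
  exact le_of_sq_le_sq this (norm_nonneg _)

theorem IsSelfAdjoint.mul_norm_le_norm_apply_of_spectrum_gap (hL : IsSelfAdjoint L)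
    (hδ : 0 < δ) (hgap : spectrum ℝ L ∩ Set.Ioo (-δ) δ ⊆ {0}) {x : H}
    (hx : x ∈ (LinearMap.ker (L : H →ₗ[ℝ] H))ᗮ) : δ * ‖x‖ ≤ ‖L x‖ := by
  rw [L.orthogonal_ker, hL.adjoint_eq, ← SetLike.mem_coe, Submodule.topologicalClosure_coe] at hx
  refine closure_minimal (t := {z | δ * ‖z‖ ≤ ‖L z‖}) ?_
    (isClosed_le (by fun_prop) (by fun_prop)) hx
  rintro _ ⟨y, rfl⟩
  exact hL.mul_norm_apply_le_norm_apply_apply_of_spectrum_gap hδ hgap y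

end SpectralGap

theorem Submodule.starProjection_orthogonal_inf {𝕜 E : Type*} [RCLike 𝕜] [NormedAddCommGroup E]
    [InnerProductSpace 𝕜 E] {V W : Submodule 𝕜 E} [V.HasOrthogonalProjection]
    [W.HasOrthogonalProjection] [(Vᗮ ⊓ W).HasOrthogonalProjection] (hVW : V ≤ W) :
    (Vᗮ ⊓ W).starProjection = W.starProjection - V.starProjection := by
  ext y
  refine eq_starProjection_of_mem_orthogonal ⟨?_, ?_⟩ ?_
  · have := V.sub_starProjection_mem_orthogonal (W.starProjection y)
    rwa [← ContinuousLinearMap.comp_apply, starProjection_comp_starProjection_of_le hVW] at this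
  · exact sub_mem (W.starProjection_apply_mem y) (hVW (V.starProjection_apply_mem y))
  · have hsplit : y - (W.starProjection - V.starProjection) y
        = (y - W.starProjection y) + V.starProjection y := by
      rw [sub_apply]; abel
    rw [hsplit]
    exact add_mem (orthogonal_le inf_le_right (W.sub_starProjection_mem_orthogonal y))
      (orthogonal_le inf_le_left (V.le_orthogonal_orthogonal (V.starProjection_apply_mem y)))

section OrthProj

variable {H : Type*} [NormedAddCommGroup H] [InnerProductSpace ℝ H] [CompleteSpace H]

theorem orthProj_eq_starProjection {K : Submodule ℝ H} [K.HasOrthogonalProjection]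
    (hK : IsClosed (K : Set H)) : orthProj K = K.starProjection := by
  change K.topologicalClosure.starProjection = _
  congr 1
  exact hK.submodule_topologicalClosure_eq

theorem orthProj_orthogonal_inf_apply_eq {V W : Submodule ℝ H} (hV : IsClosed (V : Set H))
    (hW : IsClosed (W : Set H)) (hVW : V ≤ W) (T : H →L[ℝ] H) {x : H} (hx : x ∈ Vᗮ ⊓ W) :
    orthProj (Vᗮ ⊓ W) (T x) =
      T x + (orthProj W * T - T * orthProj W) x - (orthProj V * T - T * orthProj V) x := by
  have := hV.completeSpace_coe
  have := hW.completeSpace_coe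
  have := (V.isClosed_orthogonal.inter hW).completeSpace_coe
  rw [orthProj_eq_starProjection hV, orthProj_eq_starProjection hW,
    orthProj_eq_starProjection (V.isClosed_orthogonal.inter hW),
    Submodule.starProjection_orthogonal_inf hVW]
  simp [Submodule.starProjection_eq_self_iff.mpr hx.2,
    V.starProjection_apply_eq_zero_iff.mpr hx.1]

end OrthProj

/-- Let `L` be a bounded self-adjoint operator on a real Hilbert space with
spectral gap `(−δ₀, δ₀) ∩ spectrum(L) ⊆ {0}`, and let `V ⊆ W` be closed subspaces with
`ker L ⊆ V`. With `U = Vᗮ ⊓ W` the orthogonal complement of `V` in `W`, for every `x ∈ U` one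
has `‖π_U (L x)‖ ≥ (δ₀ − ‖[π_W, L]‖ − ‖[π_V, L]‖)‖x‖`; in particular if
`‖[π_W, L]‖ + ‖[π_V, L]‖ < δ₀` then `π_U ∘ L` is injective on `U`. -/
theorem proj_complement_nondegenerate
    {H : Type*} [NormedAddCommGroup H] [InnerProductSpace ℝ H] [CompleteSpace H]
    (L : H →L[ℝ] H) (hL_sa : IsSelfAdjoint L)
    (δ₀ : ℝ) (hδ₀ : 0 < δ₀)
    (hspec : spectrum ℝ L ∩ Set.Ioo (-δ₀) δ₀ ⊆ {0})
    (V W : Submodule ℝ H)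
    (hV_closed : IsClosed (V : Set H)) (hW_closed : IsClosed (W : Set H))
    (hVW : V ≤ W) (hker : LinearMap.ker (L : H →ₗ[ℝ] H) ≤ V) :
    (∀ x ∈ Vᗮ ⊓ W,
      (δ₀ - ‖orthProj W * L - L * orthProj W‖ - ‖orthProj V * L - L * orthProj V‖) * ‖x‖
        ≤ ‖orthProj (Vᗮ ⊓ W) (L x)‖) ∧
    (‖orthProj W * L - L * orthProj W‖ + ‖orthProj V * L - L * orthProj V‖ < δ₀ →
      ∀ x ∈ Vᗮ ⊓ W, orthProj (Vᗮ ⊓ W) (L x) = 0 → x = 0) := by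
  set CW := orthProj W * L - L * orthProj W
  set CV := orthProj V * L - L * orthProj V
  have hbound : ∀ x ∈ Vᗮ ⊓ W, (δ₀ - ‖CW‖ - ‖CV‖) * ‖x‖ ≤ ‖orthProj (Vᗮ ⊓ W) (L x)‖ := by
    intro x hx
    have hLx : δ₀ * ‖x‖ ≤ ‖L x‖ :=
      hL_sa.mul_norm_le_norm_apply_of_spectrum_gap hδ₀ hspec (Submodule.orthogonal_le hker hx.1)
    rw [orthProj_orthogonal_inf_apply_eq hV_closed hW_closed hVW L hx]
    calc (δ₀ - ‖CW‖ - ‖CV‖) * ‖x‖ ≤ ‖L x‖ - ‖CW x‖ - ‖CV x‖ := by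
          linarith [CW.le_opNorm x, CV.le_opNorm x]
      _ ≤ ‖L x + CW x - CV x‖ := by
          have h := norm_add₃_le (a := L x + CW x - CV x) (b := -CW x) (c := CV x)
          rw [norm_neg, show L x + CW x - CV x + -CW x + CV x = L x by abel] at h
          linarith
  refine ⟨hbound, fun hsmall x hx hzero => ?_⟩
  have := hbound x hx
  rw [hzero, norm_zero] at this
  exact norm_le_zero_iff.mp (nonpos_of_mul_nonpos_right this (by linarith))
end

section
/- Let H be a real Hilbert space, L a bounded self-adjoint operator on H, δ > 0, and V a closed subspace of H that is invariant under L (L(V) ⊆ V) and on which L is δ-positive: ⟨Lv, v⟩ ≥ δ‖v‖² for all v ∈ V. Then for every x ∈ V and every t ≥ 0, ‖exp(tL) x‖ ≥ e^{tδ}·‖x‖, where exp(tL) denotes the operator exponential. -/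
/-!
The orbit `u s = exp (s • L) x` stays in `V`, since `V` is closed and invariant under every
partial sum of the exponential series, and it solves `u' = L u`. Hence
`(‖u‖²)' = 2 ⟪L u, u⟫ ≥ 2δ ‖u‖²`, so `e^{-2δs} ‖u s‖²` is nondecreasing, which gives
`‖u t‖² ≥ e^{2δt} ‖x‖²`.
-/

open scoped InnerProductSpace RealInnerProductSpace

section ExpInvariant

variable {𝕂 E : Type*} [RCLike 𝕂] [NormedAddCommGroup E] [NormedSpace 𝕂 E] [CompleteSpace E]

theorem ContinuousLinearMap.exp_apply_mem_of_forall_apply_mem {V : Submodule 𝕂 E}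
    (hV : IsClosed (V : Set E)) {A : E →L[𝕂] E} (hA : ∀ v ∈ V, A v ∈ V) {x : E} (hx : x ∈ V) :
    NormedSpace.exp A x ∈ V := by
  have hsum := (NormedSpace.expSeries_summable' (𝕂 := 𝕂) A).hasSum.mapL
    (ContinuousLinearMap.apply 𝕂 E x)
  rw [← congrFun (NormedSpace.exp_eq_tsum 𝕂) A] at hsum
  refine hV.mem_of_tendsto hsum (.of_forall fun s => V.sum_mem fun n _ => V.smul_mem _ ?_)
  rw [ContinuousLinearMap.toLinearMap_pow]
  exact Module.End.pow_apply_mem_of_forall_mem n hA x hx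

theorem ContinuousLinearMap.hasDerivAt_exp_smul_apply (A : E →L[𝕂] E) (x : E) (s : 𝕂) :
    HasDerivAt (fun r : 𝕂 => NormedSpace.exp (r • A) x) (A (NormedSpace.exp (s • A) x)) s := by
  simpa using (hasDerivAt_exp_smul_const' A s).clm_apply (hasDerivAt_const s x)

end ExpInvariant

theorem Real.exp_mul_mul_le_of_hasDerivAt {f f' : ℝ → ℝ} {c t : ℝ}
    (hf : ∀ s, HasDerivAt f (f' s) s) (hf' : ∀ s, c * f s ≤ f' s) (ht : 0 ≤ t) :
    Real.exp (c * t) * f 0 ≤ f t := by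
  have hderiv (s : ℝ) : HasDerivAt (fun r => Real.exp (-c * r) * f r)
      (Real.exp (-c * s) * (f' s - c * f s)) s := by
    refine (((hasDerivAt_id' s).const_mul (-c)).exp.mul (hf s)).congr_deriv ?_
    ring
  have hmono := monotone_of_hasDerivAt_nonneg hderiv
    fun s => mul_nonneg (Real.exp_pos _).le (sub_nonneg.2 (hf' s))
  have := hmono ht
  simp only [mul_zero, Real.exp_zero, one_mul, neg_mul, Real.exp_neg] at this
  rwa [inv_mul_eq_div, le_div_iff₀ (Real.exp_pos _), mul_comm] at this

theorem exp_mul_norm_sq_le_of_hasDerivAt {H : Type*} [NormedAddCommGroup H]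
    [InnerProductSpace ℝ H] {A : H →L[ℝ] H} {u : ℝ → H} {δ t : ℝ}
    (hu : ∀ s, HasDerivAt u (A (u s)) s) (hA : ∀ s, δ * ‖u s‖ ^ 2 ≤ ⟪A (u s), u s⟫)
    (ht : 0 ≤ t) :
    Real.exp (2 * δ * t) * ‖u 0‖ ^ 2 ≤ ‖u t‖ ^ 2 := by
  refine Real.exp_mul_mul_le_of_hasDerivAt (fun s => (hu s).norm_sq) (fun s => ?_) ht
  rw [real_inner_comm]
  linarith [hA s]

theorem exp_norm_lower_bound_on_positive_subspace_general
    {H : Type*} [NormedAddCommGroup H] [InnerProductSpace ℝ H] [CompleteSpace H]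
    (L : H →L[ℝ] H)
    (δ : ℝ)
    (V : Submodule ℝ H) (hV_closed : IsClosed (V : Set H))
    (hV_inv : ∀ v ∈ V, L v ∈ V)
    (hV_pos : ∀ v ∈ V, δ * ‖v‖ ^ 2 ≤ ⟪L v, v⟫) :
    ∀ x ∈ V, ∀ t : ℝ, 0 ≤ t →
      Real.exp (t * δ) * ‖x‖ ≤ ‖NormedSpace.exp (t • L) x‖ := by
  intro x hx t ht
  have hmem (s : ℝ) : NormedSpace.exp (s • L) x ∈ V :=
    (s • L).exp_apply_mem_of_forall_apply_mem hV_closed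
      (fun v hv => V.smul_mem s (hV_inv v hv)) hx
  have hsq := exp_mul_norm_sq_le_of_hasDerivAt (L.hasDerivAt_exp_smul_apply x)
    (fun s => hV_pos _ (hmem s)) ht
  simp only [zero_smul, NormedSpace.exp_zero, one_apply_eq_self] at hsq
  rw [← pow_le_pow_iff_left₀ (by positivity) (norm_nonneg _) two_ne_zero, mul_pow,
    ← Real.exp_nat_mul, show ((2 : ℕ) : ℝ) * (t * δ) = 2 * δ * t by push_cast; ring]
  exact hsq

/-- If `L` is a bounded self-adjoint operator on a real Hilbert space, `V` is
a closed `L`-invariant subspace on which `L` is `δ`-positive (`⟨Lv, v⟩ ≥ δ‖v‖²`), then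
`‖exp(tL) x‖ ≥ e^{tδ}‖x‖` for every `x ∈ V` and `t ≥ 0`. -/
theorem exp_norm_lower_bound_on_positive_subspace
    {H : Type*} [NormedAddCommGroup H] [InnerProductSpace ℝ H] [CompleteSpace H]
    (L : H →L[ℝ] H) (hL_sa : IsSelfAdjoint L)
    (δ : ℝ) (hδ : 0 < δ)
    (V : Submodule ℝ H) (hV_closed : IsClosed (V : Set H))
    (hV_inv : ∀ v ∈ V, L v ∈ V)
    (hV_pos : ∀ v ∈ V, δ * ‖v‖ ^ 2 ≤ ⟪L v, v⟫) :
    ∀ x ∈ V, ∀ t : ℝ, 0 ≤ t →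
      Real.exp (t * δ) * ‖x‖ ≤ ‖NormedSpace.exp (t • L) x‖ :=
  exp_norm_lower_bound_on_positive_subspace_general L δ V hV_closed hV_inv hV_pos
end

section
/- Let U be a finite-dimensional real inner product space and A : U → U a symmetric (self-adjoint) linear map with trivial kernel. If y : ℝ → U is differentiable with y'(t) = −A(y(t)) for all t ∈ ℝ and the range of y is bounded, then y(t) = 0 for all t ∈ ℝ. In other words, the only full trajectory of the nondegenerate linear flow generated by A that stays in a bounded set for all time is the constant trajectory at the origin. -/
open scoped InnerProductSpace RealInnerProductSpace

/-!
Expand `y t` in an orthonormal eigenbasis of `A`. The coordinate along an eigenvector with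
eigenvalue `μ` solves `c' = -μ c`, so `c t = e^{-μ t} c 0`; since `ker A = ⊥` we have `μ ≠ 0`,
and such an exponential stays bounded on all of `ℝ` only if `c 0 = 0`.
-/

section ScalarLinearODE

variable {E : Type*} [NormedAddCommGroup E] [NormedSpace ℝ E] {a : ℝ} {y : ℝ → E}

theorem eq_exp_mul_smul_of_hasDerivAt_smul (hy : ∀ t, HasDerivAt y (a • y t) t) (s t : ℝ) :
    y t = Real.exp (a * (t - s)) • y s := by
  have hconst : ∀ u, HasDerivAt (fun u ↦ Real.exp (-(a * u)) • y u) 0 u := by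
    intro u
    have hexp : HasDerivAt (fun u ↦ Real.exp (-(a * u))) (Real.exp (-(a * u)) * -a) u := by
      simpa using ((hasDerivAt_id u).const_mul a).neg.exp
    convert hexp.fun_smul (hy u) using 1
    rw [smul_smul, mul_neg, neg_smul, mul_comm, add_neg_cancel]
  have hst := is_const_of_deriv_eq_zero (fun u ↦ (hconst u).differentiableAt)
    (fun u ↦ (hconst u).deriv) t s
  calc y t = Real.exp (a * t) • Real.exp (-(a * t)) • y t := by
        rw [smul_smul, ← Real.exp_add, add_neg_cancel, Real.exp_zero, one_smul]
    _ = Real.exp (a * (t - s)) • y s := by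
        rw [hst, smul_smul, ← Real.exp_add]
        ring_nf

theorem eq_zero_of_hasDerivAt_smul_of_isBounded (ha : a ≠ 0)
    (hy : ∀ t, HasDerivAt y (a • y t) t) (hbdd : Bornology.IsBounded (Set.range y)) (s : ℝ) :
    y s = 0 := by
  obtain ⟨M, hM⟩ := isBounded_iff_forall_norm_le.1 hbdd
  by_contra hne
  have hs : 0 < ‖y s‖ := norm_pos_iff.2 hne
  set x := M / ‖y s‖
  -- at the time `t` with `a * (t - s) = x`, the bound `e^x ≥ x + 1` pushes `‖y t‖` above `M`
  have hgrowth : ‖y (s + x / a)‖ = Real.exp x * ‖y s‖ := by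
    rw [eq_exp_mul_smul_of_hasDerivAt_smul hy s, norm_smul, Real.norm_of_nonneg (Real.exp_nonneg _),
      add_sub_cancel_left, mul_div_cancel₀ _ ha]
  have hle : Real.exp x * ‖y s‖ ≤ M := hgrowth ▸ hM _ ⟨_, rfl⟩
  have hx : (x + 1) * ‖y s‖ = M + ‖y s‖ := by
    rw [add_mul, div_mul_cancel₀ _ hs.ne', one_mul]
  nlinarith [Real.add_one_le_exp x]

end ScalarLinearODE

theorem Module.End.HasEigenvector.ne_zero_of_ker_eq_bot {R M : Type*} [CommRing R]
    [AddCommGroup M] [Module R M] {f : Module.End R M} {μ : R} {v : M}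
    (hv : f.HasEigenvector μ v) (hf : LinearMap.ker f = ⊥) : μ ≠ 0 := by
  rintro rfl
  have hker : v ∈ LinearMap.ker f := by
    rw [LinearMap.mem_ker, hv.apply_eq_smul, zero_smul]
  exact hv.2 (by rwa [hf, Submodule.mem_bot] at hker)

theorem LinearMap.IsSymmetric.hasDerivAt_inner_of_apply_eq_smul {U : Type*}
    [NormedAddCommGroup U] [InnerProductSpace ℝ U] {A : U →ₗ[ℝ] U} (hA : A.IsSymmetric)
    {μ : ℝ} {v : U} (hv : A v = μ • v) {y : ℝ → U} (hy : ∀ t, HasDerivAt y (-A (y t)) t)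
    (t : ℝ) : HasDerivAt (fun t ↦ ⟪v, y t⟫) ((-μ) • ⟪v, y t⟫) t := by
  have h := (hasDerivAt_const t v).inner ℝ (hy t)
  rw [inner_zero_left, add_zero, inner_neg_right, ← hA, hv, real_inner_smul_left] at h
  rwa [smul_eq_mul, neg_mul]

/-- Let `U` be a finite-dimensional real inner product space and `A : U → U`
a symmetric linear map with trivial kernel. The only bounded full trajectory of the
nondegenerate linear flow `y' = −A y` is the constant trajectory at the origin. -/
theorem bounded_trajectory_of_nondegenerate_linear_flow_eq_zero
    {U : Type*} [NormedAddCommGroup U] [InnerProductSpace ℝ U] [FiniteDimensional ℝ U]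
    (A : U →ₗ[ℝ] U)
    (hA_sym : ∀ u v : U, ⟪A u, v⟫ = ⟪u, A v⟫)
    (hA_ker : LinearMap.ker A = ⊥)
    (y : ℝ → U)
    (hy : ∀ t : ℝ, HasDerivAt y (-(A (y t))) t)
    (hbdd : Bornology.IsBounded (Set.range y)) :
    ∀ t : ℝ, y t = 0 := by
  have hA : A.IsSymmetric := hA_sym
  set b := hA.eigenvectorBasis rfl
  intro t
  refine InnerProductSpace.ext_inner_left_basis b.toBasis fun i ↦ ?_
  have hev := hA.hasEigenvector_eigenvectorBasis rfl i
  have hbdd_coord : Bornology.IsBounded (Set.range fun t ↦ ⟪b i, y t⟫) := by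
    rw [← Function.comp_def, Set.range_comp]
    exact (innerSL ℝ (b i)).lipschitz.isBounded_image hbdd
  rw [OrthonormalBasis.coe_toBasis, inner_zero_right]
  exact eq_zero_of_hasDerivAt_smul_of_isBounded (neg_ne_zero.2 (hev.ne_zero_of_ker_eq_bot hA_ker))
    (hA.hasDerivAt_inner_of_apply_eq_smul hev.apply_eq_smul hy) hbdd_coord t
end

section
/- For i = 1, 2, let η_i be a flow on a locally compact Hausdorff topological space Ω_i, let S_i be a compact invariant set, and let (N_i, L_i) be an index pair for S_i: N_i and L_i are compact, (1) S_i ⊆ N_i \ L_i and S_i = Inv(closure(N_i \ L_i), η_i), (2) L_i is positively invariant relative to N_i (if x ∈ L_i and η_i(x,[0,t]) ⊆ N_i, then η_i(x,[0,t]) ⊆ L_i), and (3) L_i is an exit set for N_i (if x ∈ N_i and η_i(x,[0,∞)) ⊄ N_i, then there is t > 0 with η_i(x,[0,t]) ⊆ N_i and η_i(x,t) ∈ L_i). Then (N₁ × N₂, N₁ × L₂ ∪ L₁ × N₂) is an index pair for S₁ × S₂ with respect to the product flow η₁ × η₂ on Ω₁ × Ω₂: the two sets are compact and conditions (1), (2),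 (3) hold for S₁ × S₂. -/
/-- The maximal invariant subset of `X` with respect to a flow `η`. -/
def flowInv {Ω : Type*} (η : Ω → ℝ → Ω) (X : Set Ω) : Set Ω :=
  {x ∈ X | ∀ t : ℝ, η x t ∈ X}

/-- `(N, L)` is an index pair for a compact invariant set `S` with respect to the flow `η`:
`N` and `L` are compact, `S ⊆ N \ L` with `S = Inv(closure(N \ L), η)`, `L` is positively
invariant relative to `N`, and `L` is an exit set for `N`. -/
def IsIndexPair {Ω : Type*} [TopologicalSpace Ω] (η : Ω → ℝ → Ω) (S N L : Set Ω) : Prop :=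
  IsCompact N ∧ IsCompact L ∧
  (S ⊆ N \ L ∧ S = flowInv η (closure (N \ L))) ∧
  (∀ x ∈ L, ∀ t : ℝ, 0 ≤ t →
    (∀ s ∈ Set.Icc (0:ℝ) t, η x s ∈ N) → ∀ s ∈ Set.Icc (0:ℝ) t, η x s ∈ L) ∧
  (∀ x ∈ N, ¬ (∀ s : ℝ, 0 ≤ s → η x s ∈ N) →
    ∃ t > (0:ℝ), (∀ s ∈ Set.Icc (0:ℝ) t, η x s ∈ N) ∧ η x t ∈ L)

/-
Each condition of an index pair splits into the same condition on the two factors. The one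
real point is the exit condition: if `(x, y)` leaves `N₁ × N₂`, one of the factors leaves
its `Nᵢ`, and the factor that reaches its exit set `Lᵢ` first does so at a time up to which both
orbits stay in `N₁` and `N₂`, so the product orbit lands in `N₁ × L₂ ∪ L₁ × N₂` then.
-/

open Set

section ProdFlow

variable {Ω₁ Ω₂ : Type*}

def prodFlow (η₁ : Ω₁ → ℝ → Ω₁) (η₂ : Ω₂ → ℝ → Ω₂) : Ω₁ × Ω₂ → ℝ → Ω₁ × Ω₂ :=
  fun p t => (η₁ p.1 t, η₂ p.2 t)

def IsPositivelyInvariantRel {Ω : Type*} (η : Ω → ℝ → Ω) (N L : Set Ω) : Prop :=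
  ∀ x ∈ L, ∀ t : ℝ, 0 ≤ t → (∀ s ∈ Icc (0:ℝ) t, η x s ∈ N) → ∀ s ∈ Icc (0:ℝ) t, η x s ∈ L

def IsExitSet {Ω : Type*} (η : Ω → ℝ → Ω) (N L : Set Ω) : Prop :=
  ∀ x ∈ N, ¬ (∀ s : ℝ, 0 ≤ s → η x s ∈ N) →
    ∃ t > (0:ℝ), (∀ s ∈ Icc (0:ℝ) t, η x s ∈ N) ∧ η x t ∈ L

theorem isIndexPair_iff {Ω : Type*} [TopologicalSpace Ω] (η : Ω → ℝ → Ω) (S N L : Set Ω) :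
    IsIndexPair η S N L ↔ IsCompact N ∧ IsCompact L ∧
      (S ⊆ N \ L ∧ S = flowInv η (closure (N \ L))) ∧
      IsPositivelyInvariantRel η N L ∧ IsExitSet η N L :=
  Iff.rfl

variable (η₁ : Ω₁ → ℝ → Ω₁) (η₂ : Ω₂ → ℝ → Ω₂)

theorem prod_diff_prod_union (N₁ L₁ : Set Ω₁) (N₂ L₂ : Set Ω₂) :
    N₁ ×ˢ N₂ \ (N₁ ×ˢ L₂ ∪ L₁ ×ˢ N₂) = (N₁ \ L₁) ×ˢ (N₂ \ L₂) := by
  ext ⟨x, y⟩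
  simp only [mem_sdiff, mem_prod, mem_union]
  tauto

theorem flowInv_prodFlow (X₁ : Set Ω₁) (X₂ : Set Ω₂) :
    flowInv (prodFlow η₁ η₂) (X₁ ×ˢ X₂) = flowInv η₁ X₁ ×ˢ flowInv η₂ X₂ := by
  ext ⟨x, y⟩
  simp only [flowInv, prodFlow, mem_prod, mem_ofPred_eq, forall_and]
  tauto

theorem IsPositivelyInvariantRel.prodFlow {N₁ L₁ : Set Ω₁} {N₂ L₂ : Set Ω₂}
    (h₁ : IsPositivelyInvariantRel η₁ N₁ L₁) (h₂ : IsPositivelyInvariantRel η₂ N₂ L₂) :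
    IsPositivelyInvariantRel (prodFlow η₁ η₂) (N₁ ×ˢ N₂) (N₁ ×ˢ L₂ ∪ L₁ ×ˢ N₂) := by
  rintro ⟨x, y⟩ hxy t ht hN s hs
  rcases hxy with ⟨-, hy⟩ | ⟨hx, -⟩
  · exact Or.inl ⟨(hN s hs).1, h₂ y hy t ht (fun s hs => (hN s hs).2) s hs⟩
  · exact Or.inr ⟨h₁ x hx t ht (fun s hs => (hN s hs).1) s hs, (hN s hs).2⟩

variable {η₁ η₂}

theorem exit_prodFlow_of_exit_left {N₁ L₁ : Set Ω₁} {N₂ L₂ : Set Ω₂} {x : Ω₁} {y : Ω₂}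
    {t : ℝ} (hx : ∀ s ∈ Icc (0:ℝ) t, η₁ x s ∈ N₁) (hxt : η₁ x t ∈ L₁)
    (hy : ∀ s ∈ Icc (0:ℝ) t, η₂ y s ∈ N₂) (ht : 0 ≤ t) :
    (∀ s ∈ Icc (0:ℝ) t, prodFlow η₁ η₂ (x, y) s ∈ N₁ ×ˢ N₂) ∧
      prodFlow η₁ η₂ (x, y) t ∈ N₁ ×ˢ L₂ ∪ L₁ ×ˢ N₂ :=
  ⟨fun s hs => ⟨hx s hs, hy s hs⟩, Or.inr ⟨hxt, hy t ⟨ht, le_rfl⟩⟩⟩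

theorem exit_prodFlow_of_exit_right {N₁ L₁ : Set Ω₁} {N₂ L₂ : Set Ω₂} {x : Ω₁} {y : Ω₂}
    {t : ℝ} (hx : ∀ s ∈ Icc (0:ℝ) t, η₁ x s ∈ N₁)
    (hy : ∀ s ∈ Icc (0:ℝ) t, η₂ y s ∈ N₂) (hyt : η₂ y t ∈ L₂) (ht : 0 ≤ t) :
    (∀ s ∈ Icc (0:ℝ) t, prodFlow η₁ η₂ (x, y) s ∈ N₁ ×ˢ N₂) ∧
      prodFlow η₁ η₂ (x, y) t ∈ N₁ ×ˢ L₂ ∪ L₁ ×ˢ N₂ :=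
  ⟨fun s hs => ⟨hx s hs, hy s hs⟩, Or.inl ⟨hx t ⟨ht, le_rfl⟩, hyt⟩⟩

theorem IsExitSet.prodFlow {N₁ L₁ : Set Ω₁} {N₂ L₂ : Set Ω₂}
    (h₁ : IsExitSet η₁ N₁ L₁) (h₂ : IsExitSet η₂ N₂ L₂) :
    IsExitSet (prodFlow η₁ η₂) (N₁ ×ˢ N₂) (N₁ ×ˢ L₂ ∪ L₁ ×ˢ N₂) := by
  rintro ⟨x, y⟩ ⟨hx, hy⟩ hleaves
  by_cases hxN : ∀ s : ℝ, 0 ≤ s → η₁ x s ∈ N₁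
  · by_cases hyN : ∀ s : ℝ, 0 ≤ s → η₂ y s ∈ N₂
    · exact absurd (fun s hs => ⟨hxN s hs, hyN s hs⟩) hleaves
    obtain ⟨t, ht, hyt, hyL⟩ := h₂ y hy hyN
    exact ⟨t, ht, exit_prodFlow_of_exit_right (fun s hs => hxN s hs.1) hyt hyL ht.le⟩
  obtain ⟨t₁, ht₁, hxt₁, hxL⟩ := h₁ x hx hxN
  by_cases hyN : ∀ s : ℝ, 0 ≤ s → η₂ y s ∈ N₂
  · exact ⟨t₁, ht₁, exit_prodFlow_of_exit_left hxt₁ hxL (fun s hs => hyN s hs.1) ht₁.le⟩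
  obtain ⟨t₂, ht₂, hyt₂, hyL⟩ := h₂ y hy hyN
  rcases le_total t₁ t₂ with hle | hle
  · exact ⟨t₁, ht₁, exit_prodFlow_of_exit_left hxt₁ hxL
      (fun s hs => hyt₂ s ⟨hs.1, hs.2.trans hle⟩) ht₁.le⟩
  · exact ⟨t₂, ht₂, exit_prodFlow_of_exit_right
      (fun s hs => hxt₁ s ⟨hs.1, hs.2.trans hle⟩) hyt₂ hyL ht₂.le⟩

end ProdFlow

theorem isIndexPair_prod_general
    {Ω₁ Ω₂ : Type*} [TopologicalSpace Ω₁] [TopologicalSpace Ω₂]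
    (η₁ : Ω₁ → ℝ → Ω₁) (η₂ : Ω₂ → ℝ → Ω₂)
    (S₁ N₁ L₁ : Set Ω₁) (S₂ N₂ L₂ : Set Ω₂)
    (h₁ : IsIndexPair η₁ S₁ N₁ L₁) (h₂ : IsIndexPair η₂ S₂ N₂ L₂) :
    IsIndexPair (fun p : Ω₁ × Ω₂ => fun t => (η₁ p.1 t, η₂ p.2 t))
      (S₁ ×ˢ S₂) (N₁ ×ˢ N₂) (N₁ ×ˢ L₂ ∪ L₁ ×ˢ N₂) := by
  obtain ⟨hN₁, hL₁, ⟨hS₁N₁, rfl⟩, hpos₁, hexit₁⟩ := (isIndexPair_iff η₁ S₁ N₁ L₁).1 h₁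
  obtain ⟨hN₂, hL₂, ⟨hS₂N₂, rfl⟩, hpos₂, hexit₂⟩ := (isIndexPair_iff η₂ S₂ N₂ L₂).1 h₂
  refine ⟨hN₁.prod hN₂, (hN₁.prod hL₂).union (hL₁.prod hN₂), ⟨?_, ?_⟩,
    hpos₁.prodFlow η₁ η₂ hpos₂, hexit₁.prodFlow hexit₂⟩
  · rw [prod_diff_prod_union]
    exact prod_mono hS₁N₁ hS₂N₂
  · rw [prod_diff_prod_union, closure_prod_eq]
    exact (flowInv_prodFlow η₁ η₂ _ _).symm

/-- If `(N᾿i, L᾿i)` is an index pair for the compact invariant set `S᾿i` of a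
flow `η᾿i` on a locally compact Hausdorff space `Ω᾿i` (i = 1, 2), then
`(N₁ × N₂, N₁ × L₂ ∪ L₁ × N₂)` is an index pair for `S₁ × S₂` with respect to the product
flow on `Ω₁ × Ω₂`. -/
theorem isIndexPair_prod
    {Ω₁ Ω₂ : Type*} [TopologicalSpace Ω₁] [TopologicalSpace Ω₂]
    [LocallyCompactSpace Ω₁] [T2Space Ω₁] [LocallyCompactSpace Ω₂] [T2Space Ω₂]
    (η₁ : Ω₁ → ℝ → Ω₁) (η₂ : Ω₂ → ℝ → Ω₂)
    (hη₁_cont : Continuous (fun p : Ω₁ × ℝ => η₁ p.1 p.2))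
    (hη₁_zero : ∀ x, η₁ x 0 = x)
    (hη₁_group : ∀ (x : Ω₁) (s t : ℝ), η₁ (η₁ x s) t = η₁ x (s + t))
    (hη₂_cont : Continuous (fun p : Ω₂ × ℝ => η₂ p.1 p.2))
    (hη₂_zero : ∀ x, η₂ x 0 = x)
    (hη₂_group : ∀ (x : Ω₂) (s t : ℝ), η₂ (η₂ x s) t = η₂ x (s + t))
    (S₁ N₁ L₁ : Set Ω₁) (S₂ N₂ L₂ : Set Ω₂)
    (hS₁_cpt : IsCompact S₁) (hS₁_inv : ∀ x ∈ S₁, ∀ t : ℝ, η₁ x t ∈ S₁)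
    (hS₂_cpt : IsCompact S₂) (hS₂_inv : ∀ x ∈ S₂, ∀ t : ℝ, η₂ x t ∈ S₂)
    (h₁ : IsIndexPair η₁ S₁ N₁ L₁) (h₂ : IsIndexPair η₂ S₂ N₂ L₂) :
    IsIndexPair (fun p : Ω₁ × Ω₂ => fun t => (η₁ p.1 t, η₂ p.2 t))
      (S₁ ×ˢ S₂) (N₁ ×ˢ N₂) (N₁ ×ˢ L₂ ∪ L₁ ×ˢ N₂) :=
  isIndexPair_prod_general η₁ η₂ S₁ N₁ L₁ S₂ N₂ L₂ h₁ h₂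
end
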